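/- Let U₂: ℤ⁴ → ℤ⁴ be the linear map given by the matrix with rows (1, 0, 0, 0), (0, 0, 0, 1), (2, 0, −1, 2), (0, 1, −1, 0), let S₂ = ω₂ ∩ ℤ⁴, and let S_A be the additive subsemigroup of ℤ⁴ generated by 𝒢₂ = {g₁, g₂, g₃, g₄, g₅, g₆, g₇, g₃−g₁, g₆−g₁, g₃−g₂, g₅−g₄, g₆−g₄, g₆−g₇}. Then the image U₂(S₂) equals the saturation of S_A, namely the set {x ∈ ℤ⁴ : n·x ∈ S_A for some positive integer n}. In particular the saturation of S_A is a pointed saturated affine semigroup isomorphic to S₂. -/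

import Mathlib

/-- The seven lattice points `g₁, …, g₇` (0-indexed as `g 0, …, g 6`). -/
def g : Fin 7 → (Fin 4 → ℤ) :=
  ![![1,0,0,0], ![0,1,0,0], ![1,1,2,0], ![0,0,0,1],
    ![0,2,2,1], ![1,1,1,0], ![0,1,1,1]]

/-- Coercion of an integer vector to a real vector. -/
def toR (v : Fin 4 → ℤ) : Fin 4 → ℝ := fun j => (v j : ℝ)

/-- The convex cone generated by a finite family of vectors in `ℝ⁴`. -/
def cone {n : ℕ} (v : Fin n → (Fin 4 → ℝ)) : Set (Fin 4 → ℝ) :=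
  {x | ∃ lam : Fin n → ℝ, (∀ i, 0 ≤ lam i) ∧ x = ∑ i, lam i • v i}

/-- The cone `ω₂` generated by `g₁, …, g₅`. -/
def ω₂ : Set (Fin 4 → ℝ) := cone (fun i : Fin 5 => toR (g (Fin.castLE (by norm_num) i)))

/-- The semigroup `S₂ = ω₂ ∩ ℤ⁴`. -/
def S₂ : Set (Fin 4 → ℤ) := {v | toR v ∈ ω₂}

/-- The matrix `U₂` (acting on column vectors). -/
def U₂ : Matrix (Fin 4) (Fin 4) ℤ :=
  !![1, 0, 0, 0;
     0, 0, 0, 1;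
     2, 0, -1, 2;
     0, 1, -1, 0]

/-- The generating set `𝒢₂`. -/
def G₂ : Set (Fin 4 → ℤ) :=
  {g 0, g 1, g 2, g 3, g 4, g 5, g 6,
   g 2 - g 0, g 5 - g 0, g 2 - g 1, g 4 - g 3, g 5 - g 3, g 5 - g 6}

/-- The subsemigroup `S_A` of `ℤ⁴` generated by `𝒢₂`. -/
def SA : AddSubmonoid (Fin 4 → ℤ) := AddSubmonoid.closure G₂

/-- The saturation of `S_A` in `ℤ⁴`. -/
def satSA : Set (Fin 4 → ℤ) := {x | ∃ n : ℕ, 0 < n ∧ n • x ∈ SA}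

/-!
The matrix `U₂` is unimodular, with inverse `V₂`, so `U₂(S₂)` is the set of `y` with
`V₂ y ∈ S₂`. The cone `ω₂` has six facets, which describe `S₂` by linear inequalities.
Every generator in `𝒢₂` is mapped by `V₂` into `S₂`, and `S₂` is closed under
addition and saturated, so the saturation of `S_A` lies in `U₂(S₂)`. Conversely, the circuit
`g₁ + g₅ = g₂ + g₃ + g₄` triangulates `ω₂` into the cones over `{g₁, g₂, g₃, g₄}` and
`{g₂, g₃, g₄, g₅}`, both of index `2`, so twice every point of `S₂` is an `ℕ`-combination of
`g₁, …, g₅`. Since `U₂` maps `g₁, …, g₅` into `𝒢₂`, twice every point of `U₂(S₂)` lies in `S_A`.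
-/

open Matrix

lemma cone_eq_hull {n : ℕ} (v : Fin n → (Fin 4 → ℝ)) :
    cone v = PointedCone.hull ℝ (Set.range v) := by
  ext x
  rw [SetLike.mem_coe, PointedCone.hull, Submodule.mem_span_range_iff_exists_fun]
  constructor
  · rintro ⟨lam, hlam, rfl⟩
    exact ⟨fun i => ⟨lam i, hlam i⟩, rfl⟩
  · rintro ⟨c, rfl⟩
    exact ⟨fun i => c i, fun i => (c i).2, rfl⟩

def ω₂Cone : PointedCone ℝ (Fin 4 → ℝ) :=
  PointedCone.hull ℝ (Set.range fun i : Fin 5 => toR (g (Fin.castLE (by norm_num) i)))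

def S₂Submonoid : AddSubmonoid (Fin 4 → ℤ) :=
  ω₂Cone.toAddSubmonoid.comap ((Int.castAddHom ℝ).compLeft (Fin 4))

lemma coe_S₂Submonoid : (S₂Submonoid : Set (Fin 4 → ℤ)) = S₂ := by
  ext x
  exact (Set.ext_iff.1 (cone_eq_hull _) (toR x)).symm

lemma closure_g_le_S₂Submonoid :
    AddSubmonoid.closure {g 0, g 1, g 2, g 3, g 4} ≤ S₂Submonoid := by
  rw [AddSubmonoid.closure_le]
  rintro _ (rfl | rfl | rfl | rfl | rfl)
  exacts [PointedCone.subset_hull ⟨0, rfl⟩, PointedCone.subset_hull ⟨1, rfl⟩,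
    PointedCone.subset_hull ⟨2, rfl⟩, PointedCone.subset_hull ⟨3, rfl⟩,
    PointedCone.subset_hull ⟨4, rfl⟩]

lemma mem_S₂Submonoid_of_nsmul_mem {x : Fin 4 → ℤ} {n : ℕ} (hn : 0 < n)
    (hx : n • x ∈ S₂Submonoid) : x ∈ S₂Submonoid := by
  have key := ω₂Cone.smul_mem (by positivity : (0 : ℝ) ≤ 1 / n) (AddSubmonoid.mem_comap.1 hx)
  rw [S₂Submonoid, AddSubmonoid.mem_comap, Submodule.mem_toAddSubmonoid]
  convert key using 1
  ext j
  have : (n : ℝ) ≠ 0 := by positivity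
  simp only [AddMonoidHom.compLeft_apply, Int.coe_castAddHom, Function.comp_apply, nsmul_eq_mul,
    Pi.smul_apply, Pi.mul_apply, Pi.natCast_apply, Int.cast_mul, Int.cast_natCast, smul_eq_mul]
  field_simp

def ω₂Lattice : AddSubmonoid (Fin 4 → ℤ) where
  carrier := {x | 0 ≤ x 0 ∧ 0 ≤ x 2 ∧ 0 ≤ x 3 ∧ x 2 ≤ 2 * x 1 ∧ x 2 ≤ x 0 + x 1 ∧
    x 2 ≤ 2 * x 0 + 2 * x 3}
  zero_mem' := by simp
  add_mem' := by
    rintro a b ⟨_, _, _, _, _, _⟩ ⟨_, _, _, _, _, _⟩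
    refine ⟨?_, ?_, ?_, ?_, ?_, ?_⟩ <;> dsimp only [Pi.add_apply] <;> omega

lemma mem_ω₂Lattice_iff {x : Fin 4 → ℤ} : x ∈ ω₂Lattice ↔ 0 ≤ x 0 ∧ 0 ≤ x 2 ∧ 0 ≤ x 3 ∧
    x 2 ≤ 2 * x 1 ∧ x 2 ≤ x 0 + x 1 ∧ x 2 ≤ 2 * x 0 + 2 * x 3 :=
  Iff.rfl

lemma mem_ω₂Lattice_of_nsmul_mem {x : Fin 4 → ℤ} {n : ℕ} (hn : 0 < n)
    (hx : n • x ∈ ω₂Lattice) : x ∈ ω₂Lattice := by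
  have hn' : (0 : ℤ) < n := by exact_mod_cast hn
  obtain ⟨h₁, h₂, h₃, h₄, h₅, h₆⟩ := hx
  simp only [Pi.smul_apply, nsmul_eq_mul] at h₁ h₂ h₃ h₄ h₅ h₆
  refine ⟨?_, ?_, ?_, ?_, ?_, ?_⟩ <;> nlinarith

lemma eq_zero_of_mem_ω₂Lattice_of_neg_mem {x : Fin 4 → ℤ} (hx : x ∈ ω₂Lattice)
    (hnx : -x ∈ ω₂Lattice) : x = 0 := by
  obtain ⟨h₁, h₂, h₃, h₄, -⟩ := hx
  obtain ⟨n₁, n₂, n₃, n₄, -⟩ := hnx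
  simp only [Pi.neg_apply] at n₁ n₂ n₃ n₄
  funext j
  fin_cases j <;> simp only [Fin.zero_eta, Fin.mk_one, Fin.reduceFinMk, Pi.zero_apply] <;> omega

lemma two_nsmul_mem_closure_g {x : Fin 4 → ℤ} (hx : x ∈ ω₂Lattice) :
    2 • x ∈ AddSubmonoid.closure {g 0, g 1, g 2, g 3, g 4} := by
  obtain ⟨h₁, h₂, h₃, h₄, h₅, h₆⟩ := hx
  have mem : ∀ (i : Fin 7) (c : ℤ), i ≤ 4 →
      c.toNat • g i ∈ AddSubmonoid.closure {g 0, g 1, g 2, g 3, g 4} := fun i c hi =>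
    AddSubmonoid.nsmul_mem _ (AddSubmonoid.subset_closure (by fin_cases i <;> simp_all)) _
  rcases le_total (x 2) (2 * x 0) with h | h
  · convert add_mem (add_mem (add_mem (mem 0 (2 * x 0 - x 2) (by decide))
      (mem 1 (2 * x 1 - x 2) (by decide))) (mem 2 (x 2) (by decide)))
      (mem 3 (2 * x 3) (by decide))
    funext j
    fin_cases j <;> simp [g] <;> omega
  · convert add_mem (add_mem (add_mem (mem 1 (2 * x 0 + 2 * x 1 - 2 * x 2) (by decide))
      (mem 2 (2 * x 0) (by decide))) (mem 3 (2 * x 0 + 2 * x 3 - x 2) (by decide)))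
      (mem 4 (x 2 - 2 * x 0) (by decide))
    funext j
    fin_cases j <;> simp [g] <;> omega

lemma S₂_subset_ω₂Lattice : S₂ ⊆ ω₂Lattice := by
  rintro x ⟨lam, hlam, hx⟩
  have hx₀ := congrFun hx 0
  have hx₁ := congrFun hx 1
  have hx₂ := congrFun hx 2
  have hx₃ := congrFun hx 3
  simp only [toR, g, Finset.sum_apply, Pi.smul_apply, cons_val', cons_val_zero, cons_val_fin_one,
    smul_eq_mul, Fin.sum_univ_five, Fin.castLE_zero, Int.cast_one, mul_one, Fin.reduceCastLE,
    cons_val_one, Int.cast_zero, mul_zero, add_zero, cons_val, zero_add, Int.cast_ofNat]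
    at hx₀ hx₁ hx₂ hx₃
  have := hlam 0; have := hlam 1; have := hlam 2; have := hlam 3; have := hlam 4
  refine ⟨?_, ?_, ?_, ?_, ?_, ?_⟩ <;> rify <;> linarith

lemma S₂_eq_ω₂Lattice : S₂ = ω₂Lattice := by
  refine S₂_subset_ω₂Lattice.antisymm fun x hx => ?_
  rw [← coe_S₂Submonoid]
  exact mem_S₂Submonoid_of_nsmul_mem two_pos
    (closure_g_le_S₂Submonoid (two_nsmul_mem_closure_g hx))

def V₂ : Matrix (Fin 4) (Fin 4) ℤ :=
  !![1, 0, 0, 0;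
     2, 2, -1, 1;
     2, 2, -1, 0;
     0, 1, 0, 0]

lemma U₂_mul_V₂ : U₂ * V₂ = 1 := by decide

lemma V₂_mul_U₂ : V₂ * U₂ = 1 := by decide

lemma image_mulVec_U₂ (s : Set (Fin 4 → ℤ)) : (U₂ *ᵥ ·) '' s = (V₂ *ᵥ ·) ⁻¹' s :=
  congrFun (Set.image_eq_preimage_of_inverse (fun x => by simp [mulVec_mulVec, V₂_mul_U₂])
    (fun y => by simp [mulVec_mulVec, U₂_mul_V₂])) s

lemma image_mulVec_U₂_g_subset_G₂ : (U₂ *ᵥ ·) '' {g 0, g 1, g 2, g 3, g 4} ⊆ G₂ := by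
  simp only [Set.image_insert_eq, Set.image_singleton, Set.insert_subset_iff,
    Set.singleton_subset_iff, G₂, Set.mem_insert_iff, Set.mem_singleton_iff]
  refine ⟨?_, ?_, ?_, ?_, ?_⟩ <;> decide

lemma two_nsmul_mem_SA {y : Fin 4 → ℤ} (hy : V₂ *ᵥ y ∈ ω₂Lattice) : 2 • y ∈ SA := by
  have h := AddSubmonoid.mem_map_of_mem (mulVecLin U₂).toAddMonoidHom
    (two_nsmul_mem_closure_g hy)
  rw [AddMonoidHom.map_mclosure] at h
  have h' := AddSubmonoid.closure_mono image_mulVec_U₂_g_subset_G₂ h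
  rwa [LinearMap.toAddMonoidHom_coe, mulVecLin_apply, mulVec_smul, mulVec_mulVec, U₂_mul_V₂,
    one_mulVec] at h'

lemma SA_le_comap_ω₂Lattice : SA ≤ ω₂Lattice.comap (mulVecLin V₂).toAddMonoidHom := by
  rw [SA, AddSubmonoid.closure_le]
  intro y hy
  simp only [G₂, Set.mem_insert_iff, Set.mem_singleton_iff] at hy
  simp only [SetLike.mem_coe, AddSubmonoid.mem_comap, LinearMap.toAddMonoidHom_coe,
    mulVecLin_apply, mem_ω₂Lattice_iff]
  rcases hy with rfl | rfl | rfl | rfl | rfl | rfl | rfl | rfl | rfl | rfl | rfl | rfl | rfl <;>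
    decide

lemma satSA_eq_preimage : satSA = (V₂ *ᵥ ·) ⁻¹' ω₂Lattice := by
  refine Set.Subset.antisymm ?_ fun y hy => ⟨2, two_pos, two_nsmul_mem_SA hy⟩
  rintro y ⟨n, hn, hy⟩
  have hny := SA_le_comap_ω₂Lattice hy
  simp only [AddSubmonoid.mem_comap, LinearMap.toAddMonoidHom_coe, mulVecLin_apply,
    mulVec_smul] at hny
  exact mem_ω₂Lattice_of_nsmul_mem hn hny

/-- `U₂(S₂)` equals the saturation of `S_A`; in particular the saturation of `S_A`
is pointed and saturated (and, being the image of `S₂` under a unimodular map,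
isomorphic to `S₂` as a semigroup). -/
theorem stmt_13 :
    (fun v => U₂.mulVec v) '' S₂ = satSA ∧
    {x : Fin 4 → ℤ | x ∈ satSA ∧ -x ∈ satSA} = {0} ∧
    (∀ (x : Fin 4 → ℤ) (n : ℕ), 0 < n → n • x ∈ satSA → x ∈ satSA) := by
  refine ⟨by rw [image_mulVec_U₂, S₂_eq_ω₂Lattice, satSA_eq_preimage], ?_, ?_⟩
  · ext x
    simp only [satSA_eq_preimage, Set.mem_ofPred_eq, Set.mem_preimage, mulVec_neg,
      Set.mem_singleton_iff]
    refine ⟨fun ⟨hx, hnx⟩ => ?_, by rintro rfl; simp [zero_mem]⟩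
    have hVx := eq_zero_of_mem_ω₂Lattice_of_neg_mem hx hnx
    rw [← one_mulVec x, ← U₂_mul_V₂, ← mulVec_mulVec, hVx, mulVec_zero]
  · rintro x n hn ⟨m, hm, hx⟩
    exact ⟨m * n, Nat.mul_pos hm hn, by rwa [mul_smul]⟩
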